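/- arXiv:2002.03337 — 2 statements merged into one kernel-verified Lean document; each statement's English description precedes it below -/
import Mathlib

section
/- For every integer i ≥ 2, Σ_{j=2}^{i} F_{j−1} L_{2i−j} = (i−1) F_{2i−1} + L_{2i−2}/5 + (2/5)(−1)^i, as an identity of rational numbers. -/
/-- The Lucas numbers: L₀ = 2, L₁ = 1, Lₖ = Lₖ₋₁ + Lₖ₋₂. -/
def lucas : ℕ → ℕ
  | 0 => 2
  | 1 => 1
  | n + 2 => lucas (n + 1) + lucas n

lemma lucas_cast (n : ℕ) : (lucas n : ℚ) = 2 * Nat.fib (n + 1) - Nat.fib n := by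
  induction n using Nat.twoStepInduction with
  | zero => simp [lucas]
  | one => simp [lucas, Nat.fib_add_two]; norm_num
  | more n ih1 ih2 =>
    have h1 : lucas (n + 2) = lucas (n + 1) + lucas n := rfl
    rw [h1]
    push_cast [ih1, ih2, Nat.fib_add_two (n := n + 1), Nat.fib_add_two (n := n)]
    ring

lemma cassini (n : ℕ) :
    (Nat.fib (n + 1) : ℚ) ^ 2 - Nat.fib (n + 2) * Nat.fib n = (-1 : ℚ) ^ n := by
  induction n with
  | zero => simp
  | succ n ih =>
    have h2 : Nat.fib (n + 2) = Nat.fib n + Nat.fib (n + 1) := Nat.fib_add_two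
    have h3 : Nat.fib (n + 3) = Nat.fib (n + 1) + Nat.fib (n + 2) := Nat.fib_add_two
    rw [h2] at ih
    push_cast at ih
    simp only [show n + 1 + 1 = n + 2 from rfl, show n + 1 + 2 = n + 3 from rfl]
    push_cast [h3, h2, pow_succ]
    linear_combination (-1 : ℚ) * ih

lemma fib_mul_lucas (a b : ℕ) :
    (Nat.fib a : ℚ) * lucas (a + b)
      = Nat.fib (2 * a + b) - (-1 : ℚ) ^ a * Nat.fib b := by
  induction b using Nat.twoStepInduction with
  | zero =>
    have h : Nat.fib a ≤ 2 * Nat.fib (a + 1) :=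
      le_trans Nat.fib_le_fib_succ (by omega)
    simp only [Nat.add_zero, Nat.fib_zero]
    rw [lucas_cast, Nat.fib_two_mul]
    push_cast [h]
    ring
  | one =>
    rw [lucas_cast, show 2 * a + 1 = 2 * a + 1 from rfl, Nat.fib_two_mul_add_one]
    have hc := cassini a
    have h2 : Nat.fib (a + 2) = Nat.fib a + Nat.fib (a + 1) := Nat.fib_add_two
    rw [h2] at hc
    push_cast at hc ⊢
    simp only [show a + 1 + 1 = a + 2 from rfl]
    push_cast [h2]
    linear_combination (-1 : ℚ) * hc
  | more b ih1 ih2 =>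
    have h1 : lucas (a + (b + 2)) = lucas (a + (b + 1)) + lucas (a + b) := by
      rw [show a + (b + 2) = (a + b) + 2 from by ring,
        show a + (b + 1) = (a + b) + 1 from by ring]
      rfl
    have h2 : Nat.fib (2 * a + (b + 2)) = Nat.fib (2 * a + b) + Nat.fib (2 * a + (b + 1)) := by
      rw [show 2 * a + (b + 2) = (2 * a + b) + 2 from by ring,
        show 2 * a + (b + 1) = (2 * a + b) + 1 from by ring, Nat.fib_add_two]
    have h3 : Nat.fib (b + 2) = Nat.fib b + Nat.fib (b + 1) := Nat.fib_add_two
    rw [h1]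
    push_cast [h2, h3]
    rw [mul_add, ih1, ih2]
    push_cast
    ring

lemma lucas_add_lucas (n : ℕ) :
    (lucas (n + 2) : ℚ) + lucas n = 5 * Nat.fib (n + 1) := by
  rw [lucas_cast, lucas_cast]
  have h2 : Nat.fib (n + 2) = Nat.fib n + Nat.fib (n + 1) := Nat.fib_add_two
  have h3 : Nat.fib (n + 3) = Nat.fib (n + 1) + Nat.fib (n + 2) := Nat.fib_add_two
  push_cast [show n + 2 + 1 = n + 3 from rfl, h3, h2]
  ring

lemma alt_sum_fib (n : ℕ) :
    ∑ k ∈ Finset.range (n + 1), (-1 : ℚ) ^ k * Nat.fib (2 * k + 1)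
      = ((-1 : ℚ) ^ n * lucas (2 * n + 2) + 2) / 5 := by
  induction n with
  | zero => norm_num [show lucas 2 = 3 from rfl]
  | succ n ih =>
    rw [Finset.sum_range_succ, ih]
    have h5 := lucas_add_lucas (2 * n + 2)
    rw [show (2 * n + 2) + 2 = 2 * (n + 1) + 2 from by ring] at h5
    rw [show 2 * (n + 1) + 1 = (2 * n + 2) + 1 from by ring, pow_succ]
    linear_combination ((-1 : ℚ) ^ n / 5) * h5

theorem sum_fib_mul_lucas (i : ℕ) (hi : 2 ≤ i) :
    ∑ j ∈ Finset.Icc 2 i, (Nat.fib (j - 1) : ℚ) * lucas (2 * i - j)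
      = ((i : ℚ) - 1) * Nat.fib (2 * i - 1) + (lucas (2 * i - 2) : ℚ) / 5
        + (2 / 5) * (-1 : ℚ) ^ i := by
  have reindex : ∑ j ∈ Finset.Icc 2 i, (Nat.fib (j - 1) : ℚ) * lucas (2 * i - j)
      = ∑ k ∈ Finset.range (i - 1), (Nat.fib (i - 1 - k) : ℚ) * lucas (i + k) := by
    apply Finset.sum_nbij' (fun j => i - j) (fun k => i - k)
    · intro j hj
      simp only [Finset.mem_Icc] at hj
      simp only [Finset.mem_range]; omega
    · intro k hk
      simp only [Finset.mem_range] at hk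
      simp only [Finset.mem_Icc]; omega
    · intro j hj; simp only [Finset.mem_Icc] at hj; omega
    · intro k hk; simp only [Finset.mem_range] at hk; omega
    · intro j hj
      simp only [Finset.mem_Icc] at hj
      rw [show i - 1 - (i - j) = j - 1 from by omega, show i + (i - j) = 2 * i - j from by omega]
  rw [reindex]
  have key : ∀ k ∈ Finset.range (i - 1),
      (Nat.fib (i - 1 - k) : ℚ) * lucas (i + k)
        = Nat.fib (2 * i - 1) + (-1 : ℚ) ^ i * ((-1 : ℚ) ^ k * Nat.fib (2 * k + 1)) := by
    intro k hk
    simp only [Finset.mem_range] at hk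
    rw [show i + k = (i - 1 - k) + (2 * k + 1) from by omega, fib_mul_lucas,
      show 2 * (i - 1 - k) + (2 * k + 1) = 2 * i - 1 from by omega]
    have hsgn : (-1 : ℚ) ^ (i - 1 - k) * (-1 : ℚ) ^ (k + 1) = (-1 : ℚ) ^ i := by
      rw [← pow_add]; congr 1; omega
    have hk2 : ((-1 : ℚ) ^ k) * ((-1 : ℚ) ^ k) = 1 := by
      rw [← pow_add, ← two_mul, pow_mul]; norm_num
    have hs : (-1 : ℚ) ^ (i - 1 - k) = -((-1 : ℚ) ^ i * (-1 : ℚ) ^ k) := by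
      rw [pow_succ] at hsgn
      linear_combination (-(-1 : ℚ) ^ k) * hsgn + (-(-1 : ℚ) ^ (i - 1 - k)) * hk2
    rw [hs]; ring
  rw [Finset.sum_congr rfl key, Finset.sum_add_distrib, Finset.sum_const,
    ← Finset.mul_sum, Finset.card_range]
  rw [show i - 1 = (i - 2) + 1 from by omega, alt_sum_fib,
    show 2 * (i - 2) + 2 = 2 * i - 2 from by omega]
  have hI : (-1 : ℚ) ^ i * (-1 : ℚ) ^ i = 1 := by
    rw [← pow_add, ← two_mul, pow_mul]; norm_num
  have hsgn2 : (-1 : ℚ) ^ i * (-1 : ℚ) ^ (i - 2) = 1 := by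
    rw [← pow_add, show i + (i - 2) = 2 * (i - 1) from by omega, pow_mul]; norm_num
  have hs2 : (-1 : ℚ) ^ (i - 2) = (-1 : ℚ) ^ i := by
    linear_combination ((-1 : ℚ) ^ i) * hsgn2 - ((-1 : ℚ) ^ (i - 2)) * hI
  have hcast : ((i - 2 : ℕ) : ℚ) = (i : ℚ) - 2 := by
    rw [Nat.cast_sub hi]; norm_num
  rw [nsmul_eq_mul, hs2]
  push_cast [hcast]
  field_simp
  linear_combination ((lucas (2 * i - 2) : ℚ)) * hI
end

section
/- For every integer n ≥ 2, Σ_{i=2}^{n} (−1)^i L_{2i−1} = (−1)^n F_{n−1} L_{n+1}. -/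
theorem lucas_key (n : ℕ) :
    lucas (2 * n + 2) = Nat.fib (n + 1) * lucas (n + 2) + Nat.fib n * lucas (n + 1) ∧
    lucas (2 * n + 3) = Nat.fib (n + 1) * lucas (n + 3) + Nat.fib n * lucas (n + 2) := by
  induction n with
  | zero => decide
  | succ k ih =>
    obtain ⟨h1, h2⟩ := ih
    constructor
    · rw [show 2 * (k + 1) + 2 = (2 * k + 2) + 2 from by ring, lucas,
        show 2 * k + 2 + 1 = 2 * k + 3 from rfl, h1, h2, Nat.fib_add_two,
        show k + 1 + 2 = k + 3 from rfl, show k + 1 + 1 = k + 2 from rfl,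
        show k + 3 = (k + 1) + 2 from rfl, lucas]
      ring
    · rw [show 2 * (k + 1) + 3 = (2 * k + 3) + 2 from by ring, lucas,
        show 2 * k + 3 + 1 = 2 * (k + 1) + 2 from by ring]
      have h3 : lucas (2 * (k + 1) + 2) = Nat.fib (k + 2) * lucas (k + 3) + Nat.fib (k + 1) * lucas (k + 2) := by
        rw [show 2 * (k + 1) + 2 = (2 * k + 2) + 2 from by ring, lucas,
          show 2 * k + 2 + 1 = 2 * k + 3 from rfl, h1, h2, Nat.fib_add_two,
          show k + 3 = (k + 1) + 2 from rfl, lucas]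
        ring
      rw [h3, h2, show k + 1 + 3 = k + 4 from rfl, show k + 1 + 2 = k + 3 from rfl,
        show k + 1 + 1 = k + 2 from rfl, Nat.fib_add_two,
        show lucas (k + 4) = lucas (k + 3) + lucas (k + 2) from rfl]
      ring

theorem sum_alt_lucas_odd (n : ℕ) (hn : 2 ≤ n) :
    ∑ i ∈ Finset.Icc 2 n, (-1 : ℤ) ^ i * lucas (2 * i - 1)
      = (-1 : ℤ) ^ n * Nat.fib (n - 1) * lucas (n + 1) := by
  induction n with
  | zero => omega
  | succ m ih =>
    rcases Nat.lt_or_ge m 2 with hm | hm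
    · interval_cases m
      · omega
      · decide
    · rw [Finset.sum_Icc_succ_top (by omega), ih hm]
      obtain ⟨k, rfl⟩ : ∃ k, m = k + 2 := ⟨m - 2, by omega⟩
      have key := lucas_key (k + 1)
      have : (2 * (k + 2 + 1) - 1) = 2 * (k + 1) + 3 := by omega
      rw [this, key.2]
      show _ = (-1 : ℤ) ^ (k + 3) * Nat.fib (k + 2) * lucas (k + 4)
      have h1 : (k + 2 - 1) = k + 1 := by omega
      rw [h1]
      rw [show k + 2 + 1 = k + 3 from rfl, show k + 1 + 3 = k + 4 from rfl,
        show k + 1 + 2 = k + 3 from rfl]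
      push_cast
      ring
end
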